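/- For a weighted connected undirected hypergraph, if the Lin-Lu-Yau curvature satisfies κ(u,v) ≥ C for every well-transported pair {u,v} (a pair contained in a common hyperedge h with d(u,v) = w_h), then κ(x,y) ≥ C for every pair of vertices x, y ∈ V. -/

import Mathlib

open Finset Filter Topology

variable {V : Type*} [Fintype V] [DecidableEq V]

/-- A finite weighted undirected hypergraph with positive hyperedge weights. -/
structure UHyp (V : Type*) [Fintype V] [DecidableEq V] where
  E : Finset (Finset V)
  w : Finset V → ℝ
  pos : ∀ h ∈ E, 0 < w h

/-- `γ` is a hyperpath connecting `u` and `v`. -/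
def IsHyperpath (G : UHyp V) (γ : List (Finset V)) (u v : V) : Prop :=
  γ ≠ [] ∧ (∀ h ∈ γ, h ∈ G.E) ∧
  (∀ h0, γ.head? = some h0 → u ∈ h0) ∧
  (∀ hl, γ.getLast? = some hl → v ∈ hl) ∧
  List.Chain' (fun a b => (a ∩ b).Nonempty) γ

/-- Weighted hyperpath distance. -/
noncomputable def hdist (G : UHyp V) (u v : V) : ℝ :=
  if u = v then 0 else sInf {s | ∃ γ, IsHyperpath G γ u v ∧ s = (γ.map G.w).sum}

/-- Connectedness: any two distinct vertices are joined by a hyperpath. -/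
def UConnected (G : UHyp V) : Prop :=
  ∀ u v : V, u ≠ v → ∃ γ, IsHyperpath G γ u v

/-- Weighted degree of a vertex. -/
noncomputable def Deg (G : UHyp V) (x : V) : ℝ :=
  ∑ h ∈ G.E.filter (fun h => x ∈ h), G.w h

open Classical in
/-- The lazy random-walk probability measure `μ_x^α`. -/
noncomputable def mu (G : UHyp V) (α : ℝ) (x : V) (z : V) : ℝ :=
  if z = x then α
  else if (∃ h ∈ G.E, x ∈ h ∧ z ∈ h) then
    (1 - α) * ∑ h ∈ G.E.filter (fun h => x ∈ h ∧ z ∈ h),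
      (1 / ((h.card : ℝ) - 1)) * G.w h / Deg G x
  else 0

/-- `π` is a coupling of `μ` and `ν`. -/
def IsCoupling (μ ν : V → ℝ) (π : V → V → ℝ) : Prop :=
  (∀ u v, 0 ≤ π u v) ∧ (∀ u, ∑ v, π u v = μ u) ∧ (∀ v, ∑ u, π u v = ν v)

/-- The 1-Wasserstein functional associated to a cost `d`. -/
noncomputable def Wd (d : V → V → ℝ) (μ ν : V → ℝ) : ℝ :=
  sInf {s | ∃ π, IsCoupling μ ν π ∧ s = ∑ u, ∑ v, π u v * d u v}

/-- The 1-Wasserstein distance on a hypergraph. -/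
noncomputable def W1 (G : UHyp V) (μ ν : V → ℝ) : ℝ :=
  Wd (hdist G) μ ν

/-- Ollivier–Ricci curvature `κ_α(u,v)` between two vertices. -/
noncomputable def kappaV (G : UHyp V) (α : ℝ) (u v : V) : ℝ :=
  1 - W1 G (mu G α u) (mu G α v) / hdist G u v

/-- Length `L(h)` of a hyperedge: minimal pairwise distance within `h`. -/
noncomputable def Lh (G : UHyp V) (h : Finset V) : ℝ :=
  sInf {s | ∃ x ∈ h, ∃ y ∈ h, x ≠ y ∧ s = hdist G x y}

/-- `W_α(h)`: the sum of pairwise Wasserstein distances over vertices of `h`. -/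
noncomputable def Wedge {V : Type*} [Fintype V] [LinearOrder V] (G : UHyp V) (α : ℝ)
    (h : Finset V) : ℝ :=
  ∑ p ∈ (h ×ˢ h).filter (fun p => p.1 < p.2), W1 G (mu G α p.1) (mu G α p.2)

/-- Ollivier–Ricci curvature `κ_α(h)` of a hyperedge. -/
noncomputable def kappaE {V : Type*} [Fintype V] [LinearOrder V] (G : UHyp V) (α : ℝ)
    (h : Finset V) : ℝ :=
  1 - Wedge G α h / Lh G h

/-- Maximal hyperedge weight `max_{h∈H} w_h`. -/
noncomputable def maxW (G : UHyp V) : ℝ :=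
  sSup {x | ∃ h ∈ G.E, x = G.w h}

/-!
Along an optimal hyperpath from `x` to `y` consecutive vertices form well-transported pairs,
and every vertex `z` on it splits the distance: `d(x,y) = d(x,z) + d(z,y)`. For such `z` the
triangle inequality for `W1` (glue a coupling of `μ_x, μ_z` to one of `μ_z, μ_y`) gives
`d(x,y) κ_α(x,y) ≥ d(x,z) κ_α(x,z) + d(z,y) κ_α(z,y)`. Dividing by `1 - α` and letting `α → 1`,
the limits satisfy the same inequality, so `C ≤ κ` propagates along the path by induction.
-/

open scoped Pointwise

lemma le_csInf_add_csInf {M : Type*} [ConditionallyCompleteLattice M] [AddGroup M]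
    [AddLeftMono M] [AddRightMono M] {s t : Set M} {c : M} (hs : s.Nonempty) (hs' : BddBelow s)
    (ht : t.Nonempty) (ht' : BddBelow t) (h : ∀ a ∈ s, ∀ b ∈ t, c ≤ a + b) :
    c ≤ sInf s + sInf t := by
  rw [← csInf_add hs hs' ht ht']
  exact le_csInf (hs.add ht) (Set.forall_mem_image2.2 h)

namespace IsHyperpath

variable {G : UHyp V} {γ γ' : List (Finset V)} {u v x : V}

lemma mem_E (hγ : IsHyperpath G γ u v) {h : Finset V} (hh : h ∈ γ) : h ∈ G.E := hγ.2.1 h hh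

lemma sum_pos (hγ : IsHyperpath G γ u v) : 0 < (γ.map G.w).sum :=
  List.sum_pos _ (by simpa using fun h hh => G.pos h (hγ.mem_E hh)) (by simpa using hγ.1)

lemma singleton {h : Finset V} (hE : h ∈ G.E) (hu : u ∈ h) (hv : v ∈ h) :
    IsHyperpath G [h] u v :=
  ⟨List.cons_ne_nil _ _, by simpa using hE, by simpa using hu, by simpa using hv,
    List.isChain_singleton _⟩

lemma append (h₁ : IsHyperpath G γ u x) (h₂ : IsHyperpath G γ' x v) :
    IsHyperpath G (γ ++ γ') u v := by
  obtain ⟨hne₁, hE₁, hhead₁, hlast₁, hchain₁⟩ := h₁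
  obtain ⟨hne₂, hE₂, hhead₂, hlast₂, hchain₂⟩ := h₂
  refine ⟨by simp [hne₁], fun h hh => ?_, ?_, ?_, ?_⟩
  · rcases List.mem_append.1 hh with hh | hh
    exacts [hE₁ h hh, hE₂ h hh]
  · rwa [List.head?_append_of_ne_nil _ hne₁]
  · rwa [List.getLast?_append_of_ne_nil _ hne₂]
  · exact hchain₁.append hchain₂ fun a ha b hb => ⟨x, mem_inter.2 ⟨hlast₁ a ha, hhead₂ b hb⟩⟩

lemma tail {h h' : Finset V} {z : V} (hγ : IsHyperpath G (h :: h' :: γ) u v)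
    (hz : z ∈ h ∩ h') : IsHyperpath G (h' :: γ) z v := by
  obtain ⟨-, hE, -, hlast, hchain⟩ := hγ
  refine ⟨List.cons_ne_nil _ _, fun g hg => hE g (List.mem_cons_of_mem _ hg), ?_, ?_,
    (List.isChain_cons_cons.1 hchain).2⟩
  · simpa using (mem_inter.1 hz).2
  · simpa [List.getLast?_cons_cons] using hlast

lemma length_mul_le_sum (hγ : IsHyperpath G γ u v) {c : ℝ} (hc : ∀ h ∈ G.E, c ≤ G.w h) :
    γ.length * c ≤ (γ.map G.w).sum := by
  simpa using List.card_nsmul_le_sum (γ.map G.w) c (by simpa using fun h hh => hc h (hγ.mem_E hh))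

end IsHyperpath

section Distance

variable {G : UHyp V} {u v : V}

def pathWeights (G : UHyp V) (u v : V) : Set ℝ :=
  {s | ∃ γ, IsHyperpath G γ u v ∧ s = (γ.map G.w).sum}

lemma hdist_of_ne (huv : u ≠ v) : hdist G u v = sInf (pathWeights G u v) := if_neg huv

@[simp] lemma hdist_self (G : UHyp V) (u : V) : hdist G u u = 0 := if_pos rfl

lemma pathWeights_nonempty (hconn : UConnected G) (huv : u ≠ v) :
    (pathWeights G u v).Nonempty :=
  let ⟨γ, hγ⟩ := hconn u v huv; ⟨_, γ, hγ, rfl⟩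

lemma pathWeights_bddBelow : BddBelow (pathWeights G u v) :=
  ⟨0, by rintro _ ⟨γ, hγ, rfl⟩; exact hγ.sum_pos.le⟩

lemma hdist_nonneg (G : UHyp V) (u v : V) : 0 ≤ hdist G u v := by
  by_cases huv : u = v
  · simp [huv]
  · rw [hdist_of_ne huv]
    exact Real.sInf_nonneg fun _ ⟨γ, hγ, hs⟩ => hs ▸ hγ.sum_pos.le

lemma IsHyperpath.hdist_le {γ : List (Finset V)} (hγ : IsHyperpath G γ u v) :
    hdist G u v ≤ (γ.map G.w).sum := by
  by_cases huv : u = v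
  · simpa [huv] using hγ.sum_pos.le
  · rw [hdist_of_ne huv]
    exact csInf_le pathWeights_bddBelow ⟨γ, hγ, rfl⟩

lemma hdist_le_weight {h : Finset V} (hE : h ∈ G.E) (hu : u ∈ h) (hv : v ∈ h) :
    hdist G u v ≤ G.w h := by
  simpa using (IsHyperpath.singleton hE hu hv).hdist_le

lemma hdist_triangle (hconn : UConnected G) (x y z : V) :
    hdist G x z ≤ hdist G x y + hdist G y z := by
  by_cases hxy : x = y
  · simp [hxy]
  by_cases hyz : y = z
  · simp [hyz]
  rw [hdist_of_ne hxy, hdist_of_ne hyz]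
  refine le_csInf_add_csInf (pathWeights_nonempty hconn hxy) pathWeights_bddBelow
    (pathWeights_nonempty hconn hyz) pathWeights_bddBelow ?_
  rintro _ ⟨γ, hγ, rfl⟩ _ ⟨γ', hγ', rfl⟩
  simpa using (hγ.append hγ').hdist_le

lemma exists_pos_le_weight (G : UHyp V) : ∃ c > 0, ∀ h ∈ G.E, c ≤ G.w h := by
  by_cases hE : G.E.Nonempty
  · exact ⟨G.E.inf' hE G.w, (lt_inf'_iff hE).2 G.pos, fun h hh => inf'_le G.w hh⟩
  · exact ⟨1, one_pos, by simp [not_nonempty_iff_eq_empty.1 hE]⟩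

lemma finite_pathWeights_inter_Iic (G : UHyp V) (u v : V) (s : ℝ) :
    (pathWeights G u v ∩ Set.Iic s).Finite := by
  obtain ⟨c, hc, hcw⟩ := exists_pos_le_weight G
  refine ((List.finite_length_le (Finset V) ⌈s / c⌉₊).image fun γ => (γ.map G.w).sum).subset ?_
  rintro _ ⟨⟨γ, hγ, rfl⟩, hs⟩
  refine ⟨γ, Nat.cast_le.1 ((le_div_iff₀ hc).2 ?_ |>.trans (Nat.le_ceil _)), rfl⟩
  exact (hγ.length_mul_le_sum hcw).trans hs

lemma exists_hyperpath_sum_eq_hdist (hconn : UConnected G) (huv : u ≠ v) :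
    ∃ γ, IsHyperpath G γ u v ∧ (γ.map G.w).sum = hdist G u v := by
  obtain ⟨s₀, hs₀⟩ := pathWeights_nonempty hconn huv
  obtain ⟨m, ⟨hm, hms₀⟩, hmin⟩ := Set.exists_min_image _ id
    (finite_pathWeights_inter_Iic G u v s₀) ⟨s₀, hs₀, Set.mem_Iic.2 le_rfl⟩
  have hleast : IsLeast (pathWeights G u v) m := by
    refine ⟨hm, fun s hs => ?_⟩
    rcases le_total s s₀ with hss₀ | hs₀s
    exacts [hmin s ⟨hs, hss₀⟩, hms₀.trans hs₀s]
  obtain ⟨γ, hγ, rfl⟩ := hm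
  exact ⟨γ, hγ, by rw [hdist_of_ne huv, hleast.csInf_eq]⟩

lemma hdist_pos (hconn : UConnected G) (huv : u ≠ v) : 0 < hdist G u v := by
  obtain ⟨γ, hγ, hsum⟩ := exists_hyperpath_sum_eq_hdist hconn huv
  exact hsum ▸ hγ.sum_pos

end Distance

theorem forall_ne_of_wellTransported {G : UHyp V} (hconn : UConnected G) (P : V → V → Prop)
    (hWT : ∀ u v : V, u ≠ v → ∀ h ∈ G.E, u ∈ h → v ∈ h → hdist G u v = G.w h → P u v)
    (hsplit : ∀ x z y : V, x ≠ z → z ≠ y → hdist G x y = hdist G x z + hdist G z y →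
      P x z → P z y → P x y) :
    ∀ x y : V, x ≠ y → P x y := by
  intro x y hxy
  obtain ⟨γ, hγ, hsum⟩ := exists_hyperpath_sum_eq_hdist hconn hxy
  induction γ generalizing x with
  | nil => exact absurd rfl hγ.1
  | cons h γ ih =>
    have hE : h ∈ G.E := hγ.mem_E List.mem_cons_self
    have hx : x ∈ h := hγ.2.2.1 h rfl
    cases γ with
    | nil => exact hWT x y hxy h hE hx (hγ.2.2.2.1 h rfl) (by simpa using hsum.symm)
    | cons h' γ =>
      obtain ⟨z, hz⟩ := (List.isChain_cons_cons.1 hγ.2.2.2.2).1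
      have htail := hγ.tail hz
      have hsum' : G.w h + ((h' :: γ).map G.w).sum = hdist G x y := by simpa using hsum
      have hxz_le := hdist_le_weight hE hx (mem_inter.1 hz).1
      have hzy_le := htail.hdist_le
      have htri := hdist_triangle hconn x z y
      have hxz_eq : hdist G x z = G.w h := by linarith [hdist_nonneg G z y]
      have hzy_eq : hdist G z y = ((h' :: γ).map G.w).sum := by linarith [hdist_nonneg G x z]
      have hxz : x ≠ z := by
        rintro rfl
        linarith [hdist_self G x, G.pos h hE]
      have hzy : z ≠ y := by
        rintro rfl
        linarith [hdist_self G z, htail.sum_pos]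
      exact hsplit x z y hxz hzy (by linarith) (hWT x z hxz h hE hx (mem_inter.1 hz).1 hxz_eq)
        (ih z hzy htail hzy_eq.symm)

section Wasserstein

variable {X : Type*} [Fintype X] {d : X → X → ℝ} {μ ν ξ : X → ℝ} {π π' : X → X → ℝ}

def couplingCosts (d : X → X → ℝ) (μ ν : X → ℝ) : Set ℝ :=
  {s | ∃ π, IsCoupling μ ν π ∧ s = ∑ u, ∑ v, π u v * d u v}

lemma IsCoupling.sum_eq (hπ : IsCoupling μ ν π) : ∑ z, μ z = ∑ z, ν z := by
  simp_rw [← hπ.2.1, ← hπ.2.2]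
  exact sum_comm

lemma IsCoupling.eq_zero_of_right_eq_zero (hπ : IsCoupling μ ν π) {b : X} (hb : ν b = 0)
    (a : X) : π a b = 0 :=
  (sum_eq_zero_iff_of_nonneg fun a _ => hπ.1 a b).1 ((hπ.2.2 b).trans hb) a (mem_univ a)

lemma IsCoupling.eq_zero_of_left_eq_zero (hπ : IsCoupling μ ν π) {a : X} (ha : μ a = 0)
    (b : X) : π a b = 0 :=
  (sum_eq_zero_iff_of_nonneg fun b _ => hπ.1 a b).1 ((hπ.2.1 a).trans ha) b (mem_univ b)

lemma Wd_eq_zero_of_sum_ne (h : ∑ z, μ z ≠ ∑ z, ν z) : Wd d μ ν = 0 := by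
  have : couplingCosts d μ ν = ∅ :=
    Set.eq_empty_iff_forall_notMem.2 fun _ ⟨_, hπ, _⟩ => h hπ.sum_eq
  rw [Wd, ← couplingCosts, this, Real.sInf_empty]

/-- The normalized product coupling, or `0` when the common mass vanishes. -/
lemma exists_isCoupling (hμ : ∀ z, 0 ≤ μ z) (hν : ∀ z, 0 ≤ ν z)
    (hmass : ∑ z, μ z = ∑ z, ν z) : ∃ π, IsCoupling μ ν π := by
  set m := ∑ z, μ z
  rcases eq_or_ne m 0 with hm | hm
  · have hμ0 : ∀ a, μ a = 0 := fun a => (sum_eq_zero_iff_of_nonneg fun a _ => hμ a).1 hm a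
      (mem_univ a)
    have hν0 : ∀ b, ν b = 0 := fun b => (sum_eq_zero_iff_of_nonneg fun b _ => hν b).1
      (hmass ▸ hm) b (mem_univ b)
    exact ⟨0, fun _ _ => le_rfl, by simp [hμ0], by simp [hν0]⟩
  refine ⟨fun a b => μ a * ν b / m, fun a b => div_nonneg (mul_nonneg (hμ a) (hν b))
    (sum_nonneg fun z _ => hμ z), fun a => ?_, fun b => ?_⟩
  · rw [← sum_div, ← mul_sum, ← hmass, mul_div_cancel_right₀ _ hm]
  · rw [← sum_div, ← sum_mul, mul_div_cancel_left₀ _ hm]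

/-- Gluing: route the mass sent from `a` to `b` by `π` onward according to `π'`. -/
lemma IsCoupling.glue (hπ : IsCoupling μ ν π) (hπ' : IsCoupling ν ξ π')
    (htri : ∀ a b c, d a c ≤ d a b + d b c) :
    ∃ ρ, IsCoupling μ ξ ρ ∧
      ∑ a, ∑ c, ρ a c * d a c ≤ ∑ a, ∑ b, π a b * d a b + ∑ b, ∑ c, π' b c * d b c := by
  have hν : ∀ b, 0 ≤ ν b := fun b => hπ.2.2 b ▸ sum_nonneg fun a _ => hπ.1 a b
  set t : X → X → X → ℝ := fun a b c => π a b * π' b c / ν b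
  have ht : ∀ a b c, 0 ≤ t a b c := fun a b c =>
    div_nonneg (mul_nonneg (hπ.1 a b) (hπ'.1 b c)) (hν b)
  have hsum_c : ∀ a b, ∑ c, t a b c = π a b := fun a b => by
    rcases eq_or_ne (ν b) 0 with hb | hb
    · simp [t, hb, hπ.eq_zero_of_right_eq_zero hb a]
    · rw [← sum_div, ← mul_sum, hπ'.2.1 b, mul_div_cancel_right₀ _ hb]
  have hsum_a : ∀ b c, ∑ a, t a b c = π' b c := fun b c => by
    rcases eq_or_ne (ν b) 0 with hb | hb
    · simp [t, hb, hπ'.eq_zero_of_left_eq_zero hb c]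
    · rw [← sum_div, ← sum_mul, hπ.2.2 b, mul_div_cancel_left₀ _ hb]
  refine ⟨fun a c => ∑ b, t a b c, ⟨fun a c => sum_nonneg fun b _ => ht a b c, fun a => ?_,
    fun c => ?_⟩, ?_⟩
  · rw [sum_comm]; simp_rw [hsum_c]; exact hπ.2.1 a
  · rw [sum_comm]; simp_rw [hsum_a]; exact hπ'.2.2 c
  calc ∑ a, ∑ c, (∑ b, t a b c) * d a c
      ≤ ∑ a, ∑ c, ∑ b, (t a b c * d a b + t a b c * d b c) := by
        simp_rw [sum_mul, ← mul_add]
        gcongr with a _ c _ b _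
        exacts [ht a b c, htri a b c]
    _ = ∑ a, ∑ b, (∑ c, t a b c) * d a b + ∑ b, ∑ c, (∑ a, t a b c) * d b c := by
        simp_rw [sum_add_distrib, sum_mul]
        congr 1
        · exact sum_congr rfl fun a _ => sum_comm
        · calc _ = ∑ a, ∑ b, ∑ c, t a b c * d b c := sum_congr rfl fun a _ => sum_comm
            _ = ∑ b, ∑ a, ∑ c, t a b c * d b c := sum_comm
            _ = _ := sum_congr rfl fun b _ => sum_comm
    _ = _ := by simp_rw [hsum_c, hsum_a]

lemma couplingCosts_bddBelow (hd : ∀ u v, 0 ≤ d u v) : BddBelow (couplingCosts d μ ν) :=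
  ⟨0, by
    rintro _ ⟨π, hπ, rfl⟩
    exact sum_nonneg fun u _ => sum_nonneg fun v _ => mul_nonneg (hπ.1 u v) (hd u v)⟩

lemma Wd_triangle (hd : ∀ u v, 0 ≤ d u v) (htri : ∀ a b c, d a c ≤ d a b + d b c)
    (h₁ : ∃ π, IsCoupling μ ν π) (h₂ : ∃ π, IsCoupling ν ξ π) :
    Wd d μ ξ ≤ Wd d μ ν + Wd d ν ξ := by
  refine le_csInf_add_csInf (h₁.elim fun π hπ => ⟨_, π, hπ, rfl⟩) (couplingCosts_bddBelow hd)
    (h₂.elim fun π hπ => ⟨_, π, hπ, rfl⟩) (couplingCosts_bddBelow hd) ?_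
  rintro _ ⟨π, hπ, rfl⟩ _ ⟨π', hπ', rfl⟩
  obtain ⟨ρ, hρ, hcost⟩ := hπ.glue hπ' htri
  exact (csInf_le (couplingCosts_bddBelow hd) ⟨ρ, hρ, rfl⟩).trans hcost

end Wasserstein

section RandomWalk

variable (G : UHyp V)

lemma mu_apply (α : ℝ) (x z : V) :
    mu G α x z = (if z = x then α else 0) + (1 - α) * mu G 0 x z := by
  unfold mu
  split_ifs <;> ring

lemma mu_zero_nonneg (x z : V) : 0 ≤ mu G 0 x z := by
  unfold mu
  split_ifs
  · exact le_rfl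
  · rw [sub_zero, one_mul]
    refine sum_nonneg fun h hh => ?_
    obtain ⟨hE, hx, -⟩ := mem_filter.1 hh
    have hcard : (1 : ℝ) ≤ h.card := Nat.one_le_cast.2 (card_pos.2 ⟨x, hx⟩)
    have hdeg : 0 ≤ Deg G x := sum_nonneg fun h hh => (G.pos h (mem_filter.1 hh).1).le
    have := G.pos h hE
    positivity
  · exact le_rfl

lemma mu_nonneg {α : ℝ} (hα : α ∈ Set.Icc 0 1) (x z : V) : 0 ≤ mu G α x z := by
  rw [mu_apply]
  have := mu_zero_nonneg G x z
  split_ifs <;> nlinarith [hα.1, hα.2]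

lemma sum_mu (α : ℝ) (x : V) : ∑ z, mu G α x z = α + (1 - α) * ∑ z, mu G 0 x z := by
  simp [mu_apply G α x, sum_add_distrib, mul_sum]

end RandomWalk

section Curvature

variable {G : UHyp V} {u v x y z : V}

lemma hdist_mul_kappaV (huv : hdist G u v ≠ 0) (α : ℝ) :
    hdist G u v * kappaV G α u v = hdist G u v - W1 G (mu G α u) (mu G α v) := by
  rw [kappaV, mul_sub, mul_one, mul_div_cancel₀ _ huv]

lemma tendsto_inv_one_sub_atTop : Tendsto (fun α : ℝ => (1 - α)⁻¹) (𝓝[<] 1) atTop := by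
  refine Tendsto.inv_tendsto_nhdsGT_zero (tendsto_nhdsWithin_iff.2 ⟨?_, ?_⟩)
  · have h := ((continuous_sub_left (1 : ℝ)).tendsto 1).mono_left
      (nhdsWithin_le_nhds (s := Set.Iio 1))
    rwa [sub_self] at h
  · filter_upwards [self_mem_nhdsWithin] with α hα
    exact sub_pos.2 (Set.mem_Iio.1 hα)

/-- If the walks from `u` and `v` had different masses there would be no coupling, so
`W1 = sInf ∅ = 0` and `κ_α = 1`, whence `κ_α / (1 - α)` would diverge. -/
lemma sum_mu_zero_eq_of_tendsto {k : ℝ}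
    (hk : Tendsto (fun α => kappaV G α u v / (1 - α)) (𝓝[Set.Ico 0 1] 1) (𝓝 k)) :
    ∑ z, mu G 0 u z = ∑ z, mu G 0 v z := by
  by_contra hne
  rw [nhdsWithin_Ico_eq_nhdsLT zero_lt_one] at hk
  refine not_tendsto_nhds_of_tendsto_atTop (tendsto_inv_one_sub_atTop.congr' ?_) k hk
  filter_upwards [self_mem_nhdsWithin] with α hα
  have hmass : ∑ z, mu G α u z ≠ ∑ z, mu G α v z := by
    rw [sum_mu G α u, sum_mu G α v]
    exact fun h => hne (mul_left_cancel₀ (sub_ne_zero.2 (ne_of_lt hα).symm) (add_left_cancel h))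
  rw [kappaV, W1, Wd_eq_zero_of_sum_ne hmass, zero_div, sub_zero, one_div]

lemma exists_isCoupling_mu (hmass : ∑ z, mu G 0 u z = ∑ z, mu G 0 v z) {α : ℝ}
    (hα : α ∈ Set.Icc 0 1) : ∃ π, IsCoupling (mu G α u) (mu G α v) π :=
  exists_isCoupling (mu_nonneg G hα u) (mu_nonneg G hα v)
    (by rw [sum_mu G α u, sum_mu G α v, hmass])

lemma hdist_mul_kappaV_between (hconn : UConnected G) (hxz : x ≠ z) (hzy : z ≠ y)
    (hD : hdist G x y = hdist G x z + hdist G z y) {α : ℝ}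
    (h₁ : ∃ π, IsCoupling (mu G α x) (mu G α z) π)
    (h₂ : ∃ π, IsCoupling (mu G α z) (mu G α y) π) :
    hdist G x z * kappaV G α x z + hdist G z y * kappaV G α z y ≤
      hdist G x y * kappaV G α x y := by
  have hxz' := hdist_pos hconn hxz
  have hzy' := hdist_pos hconn hzy
  rw [hdist_mul_kappaV hxz'.ne', hdist_mul_kappaV hzy'.ne', hdist_mul_kappaV (by linarith)]
  have := Wd_triangle (hdist_nonneg G) (hdist_triangle hconn) h₁ h₂
  simp only [W1] at this ⊢
  linarith

lemma hdist_mul_limit_between (hconn : UConnected G) (hxz : x ≠ z) (hzy : z ≠ y)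
    (hD : hdist G x y = hdist G x z + hdist G z y) {kxz kzy kxy : ℝ}
    (hk_xz : Tendsto (fun α => kappaV G α x z / (1 - α)) (𝓝[Set.Ico 0 1] 1) (𝓝 kxz))
    (hk_zy : Tendsto (fun α => kappaV G α z y / (1 - α)) (𝓝[Set.Ico 0 1] 1) (𝓝 kzy))
    (hk_xy : Tendsto (fun α => kappaV G α x y / (1 - α)) (𝓝[Set.Ico 0 1] 1) (𝓝 kxy)) :
    hdist G x z * kxz + hdist G z y * kzy ≤ hdist G x y * kxy := by
  have hmass_xz := sum_mu_zero_eq_of_tendsto hk_xz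
  have hmass_zy := sum_mu_zero_eq_of_tendsto hk_zy
  have : (𝓝[Set.Ico (0 : ℝ) 1] 1).NeBot := by
    rw [nhdsWithin_Ico_eq_nhdsLT zero_lt_one]; infer_instance
  refine le_of_tendsto_of_tendsto ((hk_xz.const_mul _).add (hk_zy.const_mul _))
    (hk_xy.const_mul _) ?_
  filter_upwards [self_mem_nhdsWithin] with α hα
  have hα' : α ∈ Set.Icc 0 1 := Set.Ico_subset_Icc_self hα
  have := div_le_div_of_nonneg_right (hdist_mul_kappaV_between hconn hxz hzy hD
    (exists_isCoupling_mu hmass_xz hα') (exists_isCoupling_mu hmass_zy hα'))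
    (sub_nonneg.2 hα.2.le)
  simpa only [add_div, mul_div_assoc] using this

end Curvature

/-- a lower curvature bound on well-transported pairs extends to all pairs. -/
theorem stmt5 (G : UHyp V) (hconn : UConnected G) (C : ℝ) (K : V → V → ℝ)
    (hK : ∀ u v : V, u ≠ v →
      Tendsto (fun α => kappaV G α u v / (1 - α)) (nhdsWithin 1 (Set.Ico (0:ℝ) 1)) (nhds (K u v)))
    (hWT : ∀ u v : V, u ≠ v → ∀ h ∈ G.E, u ∈ h → v ∈ h → hdist G u v = G.w h → C ≤ K u v) :
    ∀ x y : V, x ≠ y → C ≤ K x y := by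
  refine forall_ne_of_wellTransported hconn (fun x y => C ≤ K x y) hWT ?_
  intro x z y hxz hzy hD hC_xz hC_zy
  have hxy_pos : 0 < hdist G x y := by linarith [hdist_pos hconn hxz, hdist_pos hconn hzy]
  have hxy : x ≠ y := by
    rintro rfl
    simp at hxy_pos
  have hcomb := hdist_mul_limit_between hconn hxz hzy hD (hK x z hxz) (hK z y hzy) (hK x y hxy)
  refine le_of_mul_le_mul_left ?_ hxy_pos
  calc hdist G x y * C = hdist G x z * C + hdist G z y * C := by rw [hD, add_mul]
    _ ≤ hdist G x z * K x z + hdist G z y * K z y := by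
        gcongr
        exacts [hdist_nonneg G x z, hdist_nonneg G z y]
    _ ≤ hdist G x y * K x y := hcomb
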